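/- If c ∈ SO(ℝ₊) and α is a slowly oscillating shift, then c∘α ∈ SO(ℝ₊), c − c∘α is bounded and continuous, and c(t) − c(α(t)) → 0 as t → 0 and as t → ∞. -/

import Mathlib

/-!
The bound on `log α'` keeps `α'` out of `(0, e^{-C})` (and out of `(e^C, ∞)`). Derivatives have
the intermediate value property (Darboux) and `α'` is positive somewhere since `α` is increasing,
so `e^{-C} ≤ α' ≤ e^C` everywhere; with `α(0+) = 0` the mean value theorem turns this into
`m t ≤ α t ≤ M t`. Then `α` maps `[l r, r]` into `[m l r, M r]` and both `t` and `α t` lie in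
`[m t, M t]`, so the oscillations of `c ∘ α` and the differences `c t - c (α t)` are dominated by
oscillations of `c` over intervals `[a R, b R]` of fixed ratio `a / b < 1`, which vanish as
`R → 0` and `R → ∞`.
-/

open Filter Set

noncomputable def osc {E : Type*} [NormedAddCommGroup E] (f : ℝ → E) (a b : ℝ) : ℝ :=
  sSup {d | ∃ t ∈ Set.Icc a b, ∃ τ ∈ Set.Icc a b, d = ‖f t - f τ‖}

def SO {E : Type*} [NormedAddCommGroup E] (f : ℝ → E) : Prop :=
  ContinuousOn f (Set.Ioi 0) ∧ (∃ C, ∀ t ∈ Set.Ioi (0:ℝ), ‖f t‖ ≤ C) ∧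
  ∀ l ∈ Set.Ioo (0:ℝ) 1,
    Tendsto (fun r => osc f (l * r) r) (nhdsWithin 0 (Set.Ioi 0)) (nhds 0) ∧
    Tendsto (fun r => osc f (l * r) r) atTop (nhds 0)

open Topology Real

section osc

variable {E : Type*} [NormedAddCommGroup E]

lemma osc_nonneg (f : ℝ → E) (a b : ℝ) : 0 ≤ osc f a b :=
  Real.sSup_nonneg (by rintro _ ⟨t, -, τ, -, rfl⟩; exact norm_nonneg _)

-- The bound is needed: `osc` is an `sSup`, which is `0` on an unbounded set.
lemma norm_sub_le_osc {f : ℝ → E} {a b K t τ : ℝ} (hK : ∀ x ∈ Icc a b, ‖f x‖ ≤ K)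
    (ht : t ∈ Icc a b) (hτ : τ ∈ Icc a b) : ‖f t - f τ‖ ≤ osc f a b := by
  refine le_csSup ⟨K + K, ?_⟩ ⟨t, ht, τ, hτ, rfl⟩
  rintro _ ⟨x, hx, y, hy, rfl⟩
  exact (norm_sub_le _ _).trans (add_le_add (hK x hx) (hK y hy))

lemma osc_comp_le_of_mapsTo {f : ℝ → E} {α : ℝ → ℝ} {a b a' b' K : ℝ}
    (hα : MapsTo α (Icc a b) (Icc a' b')) (hK : ∀ x ∈ Icc a' b', ‖f x‖ ≤ K) :
    osc (fun t => f (α t)) a b ≤ osc f a' b' :=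
  Real.sSup_le (by rintro _ ⟨t, ht, τ, hτ, rfl⟩; exact norm_sub_le_osc hK (hα ht) (hα hτ))
    (osc_nonneg f a' b')

end osc

namespace SO

variable {E : Type*} [NormedAddCommGroup E] {f : ℝ → E}

lemma tendsto_osc_mul_mul (hf : SO f) {a b : ℝ} (ha : 0 < a) (hab : a < b) :
    Tendsto (fun r => osc f (a * r) (b * r)) (𝓝[>] 0) (𝓝 0) ∧
      Tendsto (fun r => osc f (a * r) (b * r)) atTop (𝓝 0) := by
  have hb : 0 < b := ha.trans hab
  obtain ⟨h0, hT⟩ := hf.2.2 (a / b) ⟨div_pos ha hb, (div_lt_one hb).2 hab⟩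
  have hscale : (fun r => osc f (a * r) (b * r)) = (fun R => osc f (a / b * R) R) ∘ (b * ·) := by
    ext r
    simp only [Function.comp_apply]
    congr 1
    field_simp
  have hmul := tendsto_comap (f := (b * ·)) (x := 𝓝[>] (0 : ℝ))
  rw [comap_mulLeft_nhdsGT_zero hb] at hmul
  rw [hscale]
  exact ⟨h0.comp hmul, hT.comp (tendsto_id.const_mul_atTop hb)⟩

variable {α : ℝ → ℝ} {m M : ℝ}

lemma comp_of_mem_Icc_mul (hf : SO f) (hαc : ContinuousOn α (Ioi 0)) (hm : 0 < m) (hmM : m < M)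
    (hα : ∀ t ∈ Ioi (0 : ℝ), α t ∈ Icc (m * t) (M * t)) : SO (fun t => f (α t)) := by
  obtain ⟨K, hK⟩ := hf.2.1
  have hmaps : MapsTo α (Ioi 0) (Ioi 0) := fun t ht => (mul_pos hm ht).trans_le (hα t ht).1
  refine ⟨hf.1.comp hαc hmaps, ⟨K, fun t ht => hK _ (hmaps ht)⟩, fun l hl => ?_⟩
  have hosc : ∀ r ∈ Ioi (0 : ℝ),
      osc (fun t => f (α t)) (l * r) r ≤ osc f (m * l * r) (M * r) := by
    intro r hr
    have hlr : 0 < l * r := mul_pos hl.1 hr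
    refine osc_comp_le_of_mapsTo (fun t ht => ?_)
      (fun x hx => hK x ((mul_pos hm hlr).trans_le (by simpa only [mul_assoc] using hx.1)))
    have ht0 : 0 < t := hlr.trans_le ht.1
    constructor
    · calc m * l * r = m * (l * r) := mul_assoc _ _ _
        _ ≤ m * t := mul_le_mul_of_nonneg_left ht.1 hm.le
        _ ≤ α t := (hα t ht0).1
    · exact (hα t ht0).2.trans (mul_le_mul_of_nonneg_left ht.2 (hm.trans hmM).le)
  obtain ⟨h0, hT⟩ := hf.tendsto_osc_mul_mul (mul_pos hm hl.1) (by nlinarith [hl.2])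
  exact ⟨squeeze_zero' (.of_forall fun _ => osc_nonneg _ _ _)
      (eventually_mem_nhdsWithin.mono hosc) h0,
    squeeze_zero' (.of_forall fun _ => osc_nonneg _ _ _) ((eventually_gt_atTop 0).mono hosc) hT⟩

lemma tendsto_sub_comp_of_mem_Icc_mul (hf : SO f) (hm : 0 < m) (hm1 : m ≤ 1) (hM1 : 1 ≤ M)
    (hmM : m < M) (hα : ∀ t ∈ Ioi (0 : ℝ), α t ∈ Icc (m * t) (M * t)) :
    Tendsto (fun t => f t - f (α t)) (𝓝[>] 0) (𝓝 0) ∧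
      Tendsto (fun t => f t - f (α t)) atTop (𝓝 0) := by
  obtain ⟨K, hK⟩ := hf.2.1
  have hdiff : ∀ t ∈ Ioi (0 : ℝ), ‖f t - f (α t)‖ ≤ osc f (m * t) (M * t) := by
    intro t ht
    have ht' : t ∈ Icc (m * t) (M * t) :=
      ⟨mul_le_of_le_one_left ht.le hm1, le_mul_of_one_le_left ht.le hM1⟩
    exact norm_sub_le_osc (fun x hx => hK x ((mul_pos hm ht).trans_le hx.1)) ht' (hα t ht)
  obtain ⟨h0, hT⟩ := hf.tendsto_osc_mul_mul hm hmM
  exact ⟨squeeze_zero_norm' (eventually_mem_nhdsWithin.mono hdiff) h0,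
    squeeze_zero_norm' ((eventually_gt_atTop 0).mono hdiff) hT⟩

end SO

lemma pos_of_mem_of_abs_log_le {S : Set ℝ} (hS : S.OrdConnected) {C : ℝ}
    (hC : ∀ y ∈ S, |log y| ≤ C) {p y : ℝ} (hp : p ∈ S) (hp0 : 0 < p) (hy : y ∈ S) : 0 < y := by
  by_contra! hy0
  -- `e^{-C} / 2` lies between `y ≤ 0` and `p ≥ e^{-C}`, but its logarithm is below `-C`.
  have hexp : 0 < exp (-C) := exp_pos _
  have hp' : exp (-C) ≤ p := (le_log_iff_exp_le hp0).1 (neg_le_of_abs_le (hC p hp))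
  have hv : exp (-C) / 2 ∈ S := hS.out hy hp ⟨by linarith, by linarith⟩
  have := (le_log_iff_exp_le (by positivity)).1 (neg_le_of_abs_le (hC _ hv))
  linarith

lemma deriv_mem_Icc_exp_of_abs_log_le {α α' : ℝ → ℝ} {C : ℝ} (hmono : StrictMonoOn α (Ioi 0))
    (hderiv : ∀ t ∈ Ioi (0 : ℝ), HasDerivAt α (α' t) t)
    (hC : ∀ t ∈ Ioi (0 : ℝ), |log (α' t)| ≤ C) {t : ℝ} (ht : 0 < t) :
    α' t ∈ Icc (exp (-C)) (exp C) := by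
  have hS : (α' '' Ioi 0).OrdConnected :=
    ordConnected_Ioi.image_hasDerivWithinAt fun x hx => (hderiv x hx).hasDerivWithinAt
  obtain ⟨ξ, hξ, hslope⟩ : ∃ ξ ∈ Ioo (1 : ℝ) 2, α' ξ = (α 2 - α 1) / (2 - 1) :=
    exists_hasDerivAt_eq_slope α α' one_lt_two
      (fun x hx => (hderiv x (one_pos.trans_le hx.1)).continuousAt.continuousWithinAt)
      (fun x hx => hderiv x (one_pos.trans hx.1))
  have hξ0 : 0 < α' ξ := by
    rw [hslope]
    exact div_pos (sub_pos.2 (hmono (by norm_num) (by norm_num) one_lt_two)) (by norm_num)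
  have hpos : 0 < α' t := pos_of_mem_of_abs_log_le hS (by rintro _ ⟨x, hx, rfl⟩; exact hC x hx)
    ⟨ξ, one_pos.trans hξ.1, rfl⟩ hξ0 ⟨t, ht, rfl⟩
  obtain ⟨hlo, hhi⟩ := abs_le.1 (hC t ht)
  exact ⟨(le_log_iff_exp_le hpos).1 hlo, (log_le_iff_le_exp hpos).1 hhi⟩

lemma mem_Icc_mul_of_deriv_mem_Icc {f f' : ℝ → ℝ} {m M : ℝ}
    (hf : ∀ t ∈ Ioi (0 : ℝ), HasDerivAt f (f' t) t) (h0 : Tendsto f (𝓝[>] 0) (𝓝 0))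
    (hf' : ∀ t ∈ Ioi (0 : ℝ), f' t ∈ Icc m M) {t : ℝ} (ht : 0 < t) :
    f t ∈ Icc (m * t) (M * t) := by
  have hcont : ContinuousOn f (Ioi 0) := fun x hx => (hf x hx).continuousAt.continuousWithinAt
  have hdiff : DifferentiableOn ℝ f (interior (Ioi 0)) := by
    rw [interior_Ioi]; exact fun x hx => (hf x hx).differentiableAt.differentiableWithinAt
  have hderiv : ∀ x ∈ interior (Ioi (0 : ℝ)), deriv f x ∈ Icc m M := by
    rw [interior_Ioi]; exact fun x hx => (hf x hx).deriv ▸ hf' x hx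
  have hnear : ∀ᶠ s in 𝓝[>] 0, s ∈ Ioo 0 t := Ioo_mem_nhdsGT ht
  have hsub : Tendsto (fun s => f t - f s) (𝓝[>] 0) (𝓝 (f t)) := by
    simpa using tendsto_const_nhds.sub h0
  have hlin (k : ℝ) : Tendsto (fun s => k * (t - s)) (𝓝[>] 0) (𝓝 (k * t)) := by
    simpa using (tendsto_nhdsWithin_of_tendsto_nhds
      ((continuous_const.mul (continuous_const.sub continuous_id)).tendsto (0 : ℝ)) :
        Tendsto (fun s : ℝ => k * (t - s)) (𝓝[>] 0) _)
  constructor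
  · refine le_of_tendsto_of_tendsto (hlin m) hsub (hnear.mono fun s hs => ?_)
    exact (convex_Ioi 0).mul_sub_le_image_sub_of_le_deriv hcont hdiff
      (fun x hx => (hderiv x hx).1) s hs.1 t ht hs.2.le
  · refine le_of_tendsto_of_tendsto hsub (hlin M) (hnear.mono fun s hs => ?_)
    exact (convex_Ioi 0).image_sub_le_mul_sub_of_deriv_le hcont hdiff
      (fun x hx => (hderiv x hx).2) s hs.1 t ht hs.2.le

theorem SO_compose_shift_general (c : ℝ → ℂ) (α α' : ℝ → ℝ)
    (hc : SO c)
    (hmono : StrictMonoOn α (Set.Ioi 0))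
    (hderiv : ∀ t ∈ Set.Ioi (0:ℝ), HasDerivAt α (α' t) t)
    (h0 : Tendsto α (nhdsWithin 0 (Set.Ioi 0)) (nhds 0))
    (hlog_bdd : ∃ C, ∀ t ∈ Set.Ioi (0:ℝ), |Real.log (α' t)| ≤ C) :
    SO (fun t => c (α t)) ∧
    (ContinuousOn (fun t => c t - c (α t)) (Set.Ioi 0) ∧
      ∃ C, ∀ t ∈ Set.Ioi (0:ℝ), ‖c t - c (α t)‖ ≤ C) ∧
    Tendsto (fun t => c t - c (α t)) (nhdsWithin 0 (Set.Ioi 0)) (nhds 0) ∧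
    Tendsto (fun t => c t - c (α t)) atTop (nhds 0) := by
  obtain ⟨C, hC⟩ := hlog_bdd
  have hC0 : 0 ≤ C := (abs_nonneg _).trans (hC 1 (by norm_num))
  -- Enlarging `C` makes the linear bounds `m t ≤ α t ≤ M t` strict, `m < 1 < M`.
  have hm1 : exp (-(C + 1)) < 1 := exp_lt_one_iff.2 (by linarith)
  have hM1 : 1 < exp (C + 1) := one_lt_exp_iff.2 (by linarith)
  have hα : ∀ t ∈ Ioi (0 : ℝ), α t ∈ Icc (exp (-(C + 1)) * t) (exp (C + 1) * t) :=
    fun t ht => mem_Icc_mul_of_deriv_mem_Icc hderiv h0 (fun s hs =>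
      deriv_mem_Icc_exp_of_abs_log_le hmono hderiv (fun x hx => (hC x hx).trans (by linarith)) hs) ht
  have hαc : ContinuousOn α (Ioi 0) := fun t ht => (hderiv t ht).continuousAt.continuousWithinAt
  have hcα := hc.comp_of_mem_Icc_mul hαc (exp_pos _) (hm1.trans hM1) hα
  obtain ⟨K, hK⟩ := hc.2.1
  obtain ⟨K', hK'⟩ := hcα.2.1
  exact ⟨hcα, ⟨hc.1.sub hcα.1, K + K', fun t ht => (norm_sub_le _ _).trans
      (add_le_add (hK t ht) (hK' t ht))⟩,
    hc.tendsto_sub_comp_of_mem_Icc_mul (exp_pos _) hm1.le hM1.le (hm1.trans hM1) hα⟩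

theorem SO_compose_shift (c : ℝ → ℂ) (α α' : ℝ → ℝ)
    (hc : SO c)
    (hbij : Set.BijOn α (Set.Ioi 0) (Set.Ioi 0))
    (hmono : StrictMonoOn α (Set.Ioi 0))
    (hderiv : ∀ t ∈ Set.Ioi (0:ℝ), HasDerivAt α (α' t) t)
    (h0 : Tendsto α (nhdsWithin 0 (Set.Ioi 0)) (nhds 0))
    (hinf : Tendsto α atTop atTop)
    (hfix : ∀ t ∈ Set.Ioi (0:ℝ), α t ≠ t)
    (hlog_bdd : ∃ C, ∀ t ∈ Set.Ioi (0:ℝ), |Real.log (α' t)| ≤ C)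
    (hso : SO α') :
    SO (fun t => c (α t)) ∧
    (ContinuousOn (fun t => c t - c (α t)) (Set.Ioi 0) ∧
      ∃ C, ∀ t ∈ Set.Ioi (0:ℝ), ‖c t - c (α t)‖ ≤ C) ∧
    Tendsto (fun t => c t - c (α t)) (nhdsWithin 0 (Set.Ioi 0)) (nhds 0) ∧
    Tendsto (fun t => c t - c (α t)) atTop (nhds 0) :=
  SO_compose_shift_general c α α' hc hmono hderiv h0 hlog_bdd
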